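/- arXiv:1401.5384 — 3 statements merged into one kernel-verified Lean document; each statement's English description precedes it below -/
import Mathlib

section
/- Let ℳ be a ℂ-linear subspace of 𝕊 containing a nonzero element, and let h(ℳ) := min{h(q) : q ∈ ℳ, q ≠ 0}. If r, p ∈ ℳ are nonzero and h(r) = h(p) = h(ℳ), then r = c·p for some c ∈ ℂ. -/
/-!
The height `n * deg P_j + (j - 1)` of an entry determines both the index `j` and the degree
`deg P_j` (division with remainder by `n`), so two vector polynomials of the same height `h`
attain it at the same entry and with the same degree there. Subtracting the multiple of `p`
that cancels the leading coefficient of `r` at that entry gives an element of `ℳ` of height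
`≤ h` which cannot attain `h` anywhere, hence of height `< h(ℳ)`; it must be `0`.
-/

open Polynomial

/-- The height of an `n`-dimensional vector polynomial `p = (P_1, ..., P_n)`:
`h(p) = max (n * deg P_j + j - 1)` over `1 <= j <= n`, taken in `Z union {-infty}`,
with `deg 0 = -infty` and `h(0) = -infty`.  (Entries are indexed by `j : Fin n`,
so `j.val` plays the role of `j - 1`.) -/
noncomputable def height (n : ℕ) (p : Fin n → ℂ[X]) : WithBot ℤ :=
  Finset.univ.sup fun j => if p j = 0 then (⊥ : WithBot ℤ)
    else (((n * (p j).natDegree + j.val : ℕ) : ℤ) : WithBot ℤ)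

/-- The solution set `S` of the interpolation problem: all vector polynomials
`p` such that the linear combination of the entries evaluated at the node `z j`
with coefficients `α j` vanishes, for every node `j`. -/
def Sol (n N : ℕ) (z : Fin N → ℂ) (α : Fin N → Fin n → ℂ) : Set (Fin n → ℂ[X]) :=
  {p | ∀ j : Fin N, ∑ k : Fin n, α j k * (p k).eval (z j) = 0}

noncomputable def entryHeight (n : ℕ) (P : ℂ[X]) (j : Fin n) : WithBot ℤ :=
  if P = 0 then ⊥ else (((n * P.natDegree + j.val : ℕ) : ℤ) : WithBot ℤ)

theorem height_eq_sup_entryHeight (n : ℕ) (p : Fin n → ℂ[X]) :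
    height n p = Finset.univ.sup fun j => entryHeight n (p j) j :=
  rfl

theorem Nat.eq_and_eq_of_mul_add_eq_mul_add {n a b i k : ℕ} (hi : i < n) (hk : k < n)
    (h : n * a + i = n * b + k) : a = b ∧ i = k := by
  have hn : 0 < n := by omega
  have hdiv := congrArg (· / n) h
  have hmod := congrArg (· % n) h
  simp only [Nat.mul_add_div hn, Nat.mul_add_mod, Nat.div_eq_of_lt hi, Nat.div_eq_of_lt hk,
    Nat.mod_eq_of_lt hi, Nat.mod_eq_of_lt hk, add_zero] at hdiv hmod
  exact ⟨hdiv, hmod⟩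

section entryHeight

variable {n : ℕ} {P Q : ℂ[X]} {i j : Fin n}

theorem entryHeight_eq_bot_iff : entryHeight n P j = ⊥ ↔ P = 0 := by
  unfold entryHeight
  split_ifs with hP
  · simp [hP]
  · simp only [hP, WithBot.coe_ne_bot]

theorem entryHeight_le_of_degree_le (h : P.degree ≤ Q.degree) :
    entryHeight n P j ≤ entryHeight n Q j := by
  by_cases hP : P = 0
  · simp [entryHeight, hP]
  have hQ : Q ≠ 0 := by
    rintro rfl
    exact hP (degree_eq_bot.mp (le_bot_iff.mp h))
  have hdeg : P.natDegree ≤ Q.natDegree := natDegree_le_natDegree h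
  simp only [entryHeight, hP, hQ, if_false]
  exact_mod_cast Nat.add_le_add_right (Nat.mul_le_mul_left n hdeg) _

theorem entryHeight_sub_le :
    entryHeight n (P - Q) j ≤ max (entryHeight n P j) (entryHeight n Q j) := by
  rcases le_max_iff.mp (degree_sub_le P Q) with h | h
  · exact le_max_of_le_left (entryHeight_le_of_degree_le h)
  · exact le_max_of_le_right (entryHeight_le_of_degree_le h)

theorem entryHeight_smul_le (c : ℂ) : entryHeight n (c • P) j ≤ entryHeight n P j :=
  entryHeight_le_of_degree_le (degree_smul_le c P)

theorem entryHeight_injective (hP : P ≠ 0) (hQ : Q ≠ 0)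
    (h : entryHeight n P i = entryHeight n Q j) : i = j ∧ P.natDegree = Q.natDegree := by
  simp only [entryHeight, hP, hQ, if_false, WithBot.coe_inj, Nat.cast_inj] at h
  obtain ⟨hdeg, hij⟩ := Nat.eq_and_eq_of_mul_add_eq_mul_add i.isLt j.isLt h
  exact ⟨Fin.ext hij, hdeg⟩

end entryHeight

section height

variable {n : ℕ} {p q : Fin n → ℂ[X]}

theorem height_eq_bot_iff : height n p = ⊥ ↔ p = 0 := by
  simp [height_eq_sup_entryHeight, Finset.sup_eq_bot_iff, entryHeight_eq_bot_iff, funext_iff]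

theorem exists_height_eq_entryHeight (hp : p ≠ 0) :
    ∃ j, p j ≠ 0 ∧ height n p = entryHeight n (p j) j := by
  obtain ⟨k, -⟩ := Function.ne_iff.mp hp
  obtain ⟨j, -, hj⟩ := Finset.exists_mem_eq_sup Finset.univ ⟨k, Finset.mem_univ k⟩
    fun j => entryHeight n (p j) j
  refine ⟨j, fun hpj => ?_, hj⟩
  rw [← height_eq_sup_entryHeight, hpj, entryHeight_eq_bot_iff.mpr rfl,
    height_eq_bot_iff] at hj
  exact hp hj

theorem height_sub_le : height n (p - q) ≤ max (height n p) (height n q) :=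
  Finset.sup_le fun j _ => entryHeight_sub_le.trans <|
    max_le_max (Finset.le_sup (f := fun j => entryHeight n (p j) j) (Finset.mem_univ j))
      (Finset.le_sup (f := fun j => entryHeight n (q j) j) (Finset.mem_univ j))

theorem height_smul_le (c : ℂ) : height n (c • p) ≤ height n p :=
  Finset.sup_le fun j _ => (entryHeight_smul_le c).trans <|
    Finset.le_sup (f := fun j => entryHeight n (p j) j) (Finset.mem_univ j)

theorem exists_height_sub_smul_lt {r : Fin n → ℂ[X]} (hr : r ≠ 0) (hp : p ≠ 0)
    (h : height n r = height n p) : ∃ c : ℂ, height n (r - c • p) < height n r := by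
  obtain ⟨j, hrj, hr_eq⟩ := exists_height_eq_entryHeight hr
  obtain ⟨k, hpk, hp_eq⟩ := exists_height_eq_entryHeight hp
  obtain ⟨rfl, hdeg⟩ := entryHeight_injective hrj hpk (hr_eq.symm.trans (h.trans hp_eq))
  have hlc : (p j).leadingCoeff ≠ 0 := leadingCoeff_ne_zero.mpr hpk
  set c := (r j).leadingCoeff / (p j).leadingCoeff
  have hc : c ≠ 0 := div_ne_zero (leadingCoeff_ne_zero.mpr hrj) hlc
  refine ⟨c, lt_of_le_of_ne ?_ fun hq => ?_⟩
  · calc height n (r - c • p) ≤ max (height n r) (height n (c • p)) := height_sub_le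
      _ ≤ max (height n r) (height n p) := max_le_max le_rfl (height_smul_le c)
      _ = height n r := by rw [h, max_self]
  have hq0 : r - c • p ≠ 0 := by
    rintro hq0
    rw [hq0, height_eq_bot_iff.mpr rfl, eq_comm, height_eq_bot_iff] at hq
    exact hr hq
  obtain ⟨i, hqi, hq_eq⟩ := exists_height_eq_entryHeight hq0
  obtain ⟨rfl, hdeg'⟩ := entryHeight_injective hqi hrj (hq_eq.symm.trans (hq.trans hr_eq))
  have hlt : (r i - c • p i).degree < (r i).degree := by
    refine degree_sub_lt_left ?_ hrj ?_
    · rw [smul_eq_C_mul, degree_C_mul hc, degree_eq_natDegree hrj, degree_eq_natDegree hpk,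
        hdeg]
    · rw [smul_eq_C_mul, leadingCoeff_mul, leadingCoeff_C, div_mul_cancel₀ _ hlc]
  exact (natDegree_lt_natDegree hqi hlt).ne hdeg'

end height

theorem stmt_11_general (n : ℕ)
    (M : Submodule ℂ (Fin n → ℂ[X]))
    (r p : Fin n → ℂ[X]) (hrM : r ∈ M) (hpM : p ∈ M)
    (hr0 : r ≠ 0) (hp0 : p ≠ 0)
    (hrp : height n r = height n p)
    (hmin : ∀ q ∈ M, q ≠ 0 → height n r ≤ height n q) :
    ∃ c : ℂ, r = c • p := by
  obtain ⟨c, hlt⟩ := exists_height_sub_smul_lt hr0 hp0 hrp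
  refine ⟨c, sub_eq_zero.mp (not_not.mp fun hq0 => ?_)⟩
  exact (hmin _ (M.sub_mem hrM (M.smul_mem c hpM)) hq0).not_gt hlt

/-- Let `M` be a `ℂ`-linear subspace of the solution set `S` containing a
nonzero element, and let `h(M)` be the minimal height of nonzero elements of
`M`.  If `r, p ∈ M` are nonzero with `h(r) = h(p) = h(M)`, then `r = c • p`
for some `c : ℂ`. -/
theorem stmt_11 (n N : ℕ) (hn : 1 ≤ n) (hN : 1 ≤ N)
    (z : Fin N → ℂ) (α : Fin N → Fin n → ℂ)
    (hα : ∀ j : Fin N, 0 < ∑ k : Fin n, ‖α j k‖)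
    (M : Submodule ℂ (Fin n → ℂ[X]))
    (hM : (M : Set (Fin n → ℂ[X])) ⊆ Sol n N z α)
    (r p : Fin n → ℂ[X]) (hrM : r ∈ M) (hpM : p ∈ M)
    (hr0 : r ≠ 0) (hp0 : p ≠ 0)
    (hrp : height n r = height n p)
    (hmin : ∀ q ∈ M, q ≠ 0 → height n r ≤ height n q) :
    ∃ c : ℂ, r = c • p :=
  stmt_11_general n M r p hrM hpM hr0 hp0 hrp hmin
end

section
/- For every integer m ≥ N·n there exists p ∈ 𝕊 with h(p) = m. -/
open Polynomial

/-!
Write `m = n q + r` with `0 ≤ r < n`; then `q ≥ N`, so some monic `P` of degree `q` vanishes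
at all the nodes. The vector with `P` in entry `r` and zeros elsewhere solves every
interpolation condition and has height `n q + r = m`.
-/

theorem exists_monic_natDegree_eq_forall_eval_eq_zero {R ι : Type*} [CommRing R] [Nontrivial R]
    [Fintype ι] (z : ι → R) {d : ℕ} (hd : Fintype.card ι ≤ d) :
    ∃ P : R[X], P.Monic ∧ P.natDegree = d ∧ ∀ i, P.eval (z i) = 0 := by
  have hmonic : (∏ i, (X - C (z i))).Monic :=
    monic_prod_of_monic _ _ fun i _ => monic_X_sub_C (z i)
  refine ⟨(∏ i, (X - C (z i))) * X ^ (d - Fintype.card ι), hmonic.mul (monic_X_pow _), ?_, ?_⟩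
  · rw [hmonic.natDegree_mul (monic_X_pow _),
      natDegree_prod_of_monic _ _ fun i _ => monic_X_sub_C (z i)]
    simp [Nat.add_sub_cancel' hd]
  · intro i
    simp [eval_prod, Finset.prod_eq_zero (Finset.mem_univ i)]

theorem height_single {n : ℕ} (j : Fin n) {P : ℂ[X]} (hP : P ≠ 0) :
    height n (Pi.single j P) = ((n * P.natDegree + j.val : ℕ) : ℤ) := by
  simp [height, Pi.single_apply, apply_ite, hP, Finset.sup_ite, Finset.filter_eq']

theorem single_mem_Sol {n N : ℕ} (z : Fin N → ℂ) (α : Fin N → Fin n → ℂ) (k : Fin n)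
    {P : ℂ[X]} (hP : ∀ j, P.eval (z j) = 0) : Pi.single k P ∈ Sol n N z α := by
  intro j
  simp [Pi.single_apply, apply_ite, hP]

theorem stmt_13_general (n N : ℕ) (hn : 1 ≤ n)
    (z : Fin N → ℂ) (α : Fin N → Fin n → ℂ)
    (m : ℕ) (hm : N * n ≤ m) :
    ∃ p ∈ Sol n N z α, height n p = ((m : ℤ) : WithBot ℤ) := by
  have hNq : Fintype.card (Fin N) ≤ m / n := by
    rw [Fintype.card_fin]
    exact (Nat.le_div_iff_mul_le hn).2 hm
  obtain ⟨P, hPmonic, hPdeg, hPeval⟩ := exists_monic_natDegree_eq_forall_eval_eq_zero z hNq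
  let r : Fin n := ⟨m % n, Nat.mod_lt m hn⟩
  refine ⟨Pi.single r P, single_mem_Sol z α r hPeval, ?_⟩
  rw [height_single r hPmonic.ne_zero, hPdeg, Nat.div_add_mod m n]

/-- For every integer `m ≥ N * n` there exists a solution `p ∈ S` with
`h(p) = m`. -/
theorem stmt_13 (n N : ℕ) (hn : 1 ≤ n) (hN : 1 ≤ N)
    (z : Fin N → ℂ) (α : Fin N → Fin n → ℂ)
    (hα : ∀ j : Fin N, 0 < ∑ k : Fin n, ‖α j k‖)
    (m : ℕ) (hm : N * n ≤ m) :
    ∃ p ∈ Sol n N z α, height n p = ((m : ℤ) : WithBot ℤ) :=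
  stmt_13_general n N hn z α m hm
end

section
/- Let r_1,…,r_n be generators of 𝕊. Then the residues h(r_1) mod n, …, h(r_n) mod n are pairwise distinct and exhaust ℤ/nℤ. -/
open Polynomial

/-- `M(r_1) + ... + M(r_(j-1))`: the set of combinations of scalar-polynomial
multiples of the `r_l` with `l < j` (for `j = 0` this set is `{0}`). -/
def prevSet (n : ℕ) (r : Fin n → (Fin n → ℂ[X])) (j : Fin n) : Set (Fin n → ℂ[X]) :=
  {q | ∃ S : Fin n → ℂ[X], q = ∑ l ∈ Finset.univ.filter (fun l => l < j), S l • r l}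

/-- `r_1, ..., r_n` are generators of the solution set `S`: each `r_j` belongs
to `S \ (M(r_1) + ... + M(r_(j-1)))` and has minimal height among the elements
of that set.  (For `j = 1` this says that `r_1` is a nonzero element of `S` of
minimal height.) -/
def IsGenerators (n N : ℕ) (z : Fin N → ℂ) (α : Fin N → Fin n → ℂ)
    (r : Fin n → (Fin n → ℂ[X])) : Prop :=
  ∀ j : Fin n, r j ∈ Sol n N z α ∧ r j ∉ prevSet n r j ∧
    ∀ q ∈ Sol n N z α, q ∉ prevSet n r j → height n (r j) ≤ height n q

/-! The map `interleave n : p ↦ ∑ X^l P_l(X^n)` turns a vector polynomial `p` into a scalar one `p̂`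
whose degree is exactly `h(p)`: the summands have degrees `n deg P_l + l`, which are pairwise distinct
because they differ mod `n`, so nothing cancels. It sends `p - S • q` to `p̂ - S(X^n) q̂`.
Hence if `i < j` and `h(r_i) ≡ h(r_j) mod n`, minimality of `r_i` gives `h(r_i) ≤ h(r_j)`, and a
monomial `S = c X^m` cancels the leading term of `r̂_j`: then `r_j - S r_i ∈ 𝕊` is not in
`M(r_1) + ⋯ + M(r_{j-1})` and has smaller height than `r_j`, contradicting the minimality of `r_j`.
So the `n` residues are distinct, and therefore exhaust `ℤ/nℤ`. -/

noncomputable def interleave {R : Type*} [CommSemiring R] (n : ℕ) (p : Fin n → R[X]) : R[X] :=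
  ∑ l : Fin n, X ^ (l : ℕ) * expand R n (p l)

section Interleave

variable {R : Type*} [CommSemiring R] [Nontrivial R] {n : ℕ}

lemma degree_X_pow_mul_expand (hn : 0 < n) {P : R[X]} (hP : P ≠ 0) (l : ℕ) :
    degree (X ^ l * expand R n P) = ((n * P.natDegree + l : ℕ) : WithBot ℕ) := by
  rw [mul_comm, degree_mul_X_pow, degree_eq_natDegree ((expand_ne_zero hn).mpr hP),
    natDegree_expand, mul_comm, Nat.cast_add]

lemma degree_interleave (hn : 0 < n) (p : Fin n → R[X]) :
    (interleave n p).degree =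
      Finset.univ.sup fun l : Fin n => degree (X ^ (l : ℕ) * expand R n (p l)) := by
  refine degree_sum_eq_of_disjoint _ _ ?_
  rintro i ⟨-, hi⟩ j ⟨-, hj⟩ hij hdeg
  refine hij ?_
  have hpi : p i ≠ 0 := fun h => hi (by simp [h])
  have hpj : p j ≠ 0 := fun h => hj (by simp [h])
  simp only [Function.comp_apply, degree_X_pow_mul_expand hn hpi, degree_X_pow_mul_expand hn hpj,
    Nat.cast_inj] at hdeg
  have := congrArg (· % n) hdeg
  simp only [Nat.mul_add_mod, Nat.mod_eq_of_lt i.isLt, Nat.mod_eq_of_lt j.isLt] at this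
  exact Fin.ext this

lemma interleave_ne_zero (hn : 0 < n) {p : Fin n → R[X]} (hp : p ≠ 0) : interleave n p ≠ 0 := by
  obtain ⟨l, hl⟩ := Function.ne_iff.mp hp
  rw [Ne, ← degree_eq_bot, degree_interleave hn, Finset.sup_eq_bot_iff]
  intro h
  have hl_bot := h l (Finset.mem_univ l)
  rw [degree_X_pow_mul_expand hn hl] at hl_bot
  exact WithBot.natCast_ne_bot _ hl_bot

end Interleave

lemma interleave_sub_smul {R : Type*} [CommRing R] {n : ℕ} (p q : Fin n → R[X]) (S : R[X]) :
    interleave n (p - S • q) = interleave n p - expand R n S * interleave n q := by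
  simp only [interleave, Pi.sub_apply, Pi.smul_apply, smul_eq_mul, map_sub, map_mul, mul_sub,
    Finset.sum_sub_distrib, Finset.mul_sum]
  congr 1
  exact Finset.sum_congr rfl fun l _ => by ring

lemma degree_sub_C_mul_X_pow_mul_lt {K : Type*} [Field K] {f g : K[X]} (hf : f ≠ 0) (hg : g ≠ 0)
    {m : ℕ} (hm : g.natDegree + m = f.natDegree) :
    degree (f - C (f.leadingCoeff / g.leadingCoeff) * X ^ m * g) < degree f := by
  have hc : f.leadingCoeff / g.leadingCoeff ≠ 0 :=
    div_ne_zero (leadingCoeff_ne_zero.mpr hf) (leadingCoeff_ne_zero.mpr hg)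
  apply degree_sub_lt_left _ hf
  · rw [leadingCoeff_mul, leadingCoeff_C_mul_X_pow, div_mul_cancel₀ _ (leadingCoeff_ne_zero.mpr hg)]
  · rw [degree_mul, degree_C_mul_X_pow _ hc, degree_eq_natDegree hf, degree_eq_natDegree hg,
      ← Nat.cast_add, add_comm, hm]

lemma exists_degree_interleave_sub_smul_lt {K : Type*} [Field K] {n : ℕ} (hn : 0 < n)
    {p q : Fin n → K[X]} (hp : p ≠ 0) (hq : q ≠ 0)
    (hle : (interleave n q).natDegree ≤ (interleave n p).natDegree)
    (hmod : (interleave n q).natDegree % n = (interleave n p).natDegree % n) :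
    ∃ S : K[X], degree (interleave n (p - S • q)) < degree (interleave n p) := by
  obtain ⟨m, hm⟩ : n ∣ (interleave n p).natDegree - (interleave n q).natDegree :=
    Nat.dvd_of_mod_eq_zero (Nat.sub_mod_eq_zero_of_mod_eq hmod.symm)
  refine ⟨C ((interleave n p).leadingCoeff / (interleave n q).leadingCoeff) * X ^ m, ?_⟩
  rw [interleave_sub_smul, map_mul, expand_C, map_pow, expand_X, ← pow_mul, mul_comm n m]
  exact degree_sub_C_mul_X_pow_mul_lt (interleave_ne_zero hn hp) (interleave_ne_zero hn hq)
    (by rw [mul_comm, ← hm]; omega)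

lemma height_eq_map_degree_interleave {n : ℕ} (hn : 0 < n) (p : Fin n → ℂ[X]) :
    height n p = (interleave n p).degree.map ((↑) : ℕ → ℤ) := by
  rw [degree_interleave hn, Finset.apply_sup_eq_sup_comp_of_linearOrder (WithBot.map _)
    (WithBot.monotone_map_iff.mpr Nat.mono_cast) rfl]
  refine Finset.sup_congr rfl fun l _ => ?_
  by_cases hl : p l = 0
  · simp [hl]
  · rw [Function.comp_apply, if_neg hl, degree_X_pow_mul_expand hn hl]
    rfl

lemma height_le_height_iff {n : ℕ} (hn : 0 < n) (p q : Fin n → ℂ[X]) :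
    height n p ≤ height n q ↔ (interleave n p).degree ≤ (interleave n q).degree := by
  rw [height_eq_map_degree_interleave hn, height_eq_map_degree_interleave hn]
  exact WithBot.map_le_iff _ Nat.cast_le

lemma height_eq_natDegree_interleave {n : ℕ} (hn : 0 < n) {p : Fin n → ℂ[X]} (hp : p ≠ 0) :
    height n p = (((interleave n p).natDegree : ℤ) : WithBot ℤ) := by
  rw [height_eq_map_degree_interleave hn, degree_eq_natDegree (interleave_ne_zero hn hp)]
  rfl

lemma sub_smul_mem_sol {n N : ℕ} {z : Fin N → ℂ} {α : Fin N → Fin n → ℂ} {p q : Fin n → ℂ[X]}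
    (hp : p ∈ Sol n N z α) (hq : q ∈ Sol n N z α) (S : ℂ[X]) : p - S • q ∈ Sol n N z α := by
  intro j
  have hsum : ∑ k, α j k * ((p - S • q) k).eval (z j) =
      ∑ k, α j k * (p k).eval (z j) - S.eval (z j) * ∑ k, α j k * (q k).eval (z j) := by
    simp only [Pi.sub_apply, Pi.smul_apply, smul_eq_mul, eval_sub, eval_mul, Finset.mul_sum,
      ← Finset.sum_sub_distrib]
    exact Finset.sum_congr rfl fun k _ => by ring
  rw [hsum, hp j, hq j, mul_zero, sub_zero]

lemma prevSet_eq_span {n : ℕ} (r : Fin n → Fin n → ℂ[X]) (j : Fin n) :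
    prevSet n r j = Submodule.span ℂ[X] (r '' ↑(Finset.univ.filter (· < j))) := by
  ext q
  rw [SetLike.mem_coe, Submodule.mem_span_image_finset_iff_exists_fun']
  exact ⟨fun ⟨S, hS⟩ => ⟨S, hS.symm⟩, fun ⟨S, hS⟩ => ⟨S, hS.symm⟩⟩

namespace IsGenerators

variable {n N : ℕ} {z : Fin N → ℂ} {α : Fin N → Fin n → ℂ} {r : Fin n → Fin n → ℂ[X]}

lemma ne_zero (hr : IsGenerators n N z α r) (j : Fin n) : r j ≠ 0 := by
  intro h
  exact (hr j).2.1 (h ▸ (prevSet_eq_span r j ▸ Submodule.zero_mem _))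

lemma height_le_of_le (hr : IsGenerators n N z α r) {i j : Fin n} (hij : i ≤ j) :
    height n (r i) ≤ height n (r j) := by
  refine (hr i).2.2 (r j) (hr j).1 fun hmem => (hr j).2.1 ?_
  rw [prevSet_eq_span] at hmem ⊢
  refine Submodule.span_mono (Set.image_mono fun l hl => ?_) hmem
  simp only [Finset.coe_filter, Finset.mem_univ, true_and, Set.mem_ofPred_eq] at hl ⊢
  exact hl.trans_le hij

lemma natDegree_interleave_mod_ne (hr : IsGenerators n N z α r) (hn : 0 < n) {i j : Fin n}
    (hij : i < j) : (interleave n (r i)).natDegree % n ≠ (interleave n (r j)).natDegree % n := by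
  intro hmod
  have hle := (height_le_height_iff hn _ _).mp (hr.height_le_of_le hij.le)
  obtain ⟨S, hS⟩ := exists_degree_interleave_sub_smul_lt hn (hr.ne_zero j) (hr.ne_zero i)
    (natDegree_le_natDegree hle) hmod
  have hri : r i ∈ prevSet n r j := by
    rw [prevSet_eq_span]
    exact Submodule.subset_span (Set.mem_image_of_mem r (by simpa using hij))
  have hnot : r j - S • r i ∉ prevSet n r j := fun hmem => (hr j).2.1 <| by
    rw [prevSet_eq_span] at hmem hri ⊢
    simpa using add_mem hmem (Submodule.smul_mem _ S hri)
  exact hS.not_ge <| (height_le_height_iff hn _ _).mp <|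
    (hr j).2.2 _ (sub_smul_mem_sol (hr j).1 (hr i).1 S) hnot

end IsGenerators

theorem stmt_15_general (n N : ℕ) (hn : 1 ≤ n)
    (z : Fin N → ℂ) (α : Fin N → Fin n → ℂ)
    (r : Fin n → (Fin n → ℂ[X])) (hr : IsGenerators n N z α r) :
    ∃ H : Fin n → ℕ,
      (∀ j : Fin n, height n (r j) = ((H j : ℤ) : WithBot ℤ)) ∧
      Function.Bijective (fun j : Fin n => ((H j : ZMod n))) := by
  have : NeZero n := ⟨by omega⟩
  refine ⟨fun j => (interleave n (r j)).natDegree,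
    fun j => height_eq_natDegree_interleave hn (hr.ne_zero j), ?_⟩
  refine (Fintype.bijective_iff_injective_and_card _).mpr ⟨fun i j hij => ?_, by simp⟩
  have hmod := (ZMod.natCast_eq_natCast_iff' _ _ _).mp hij
  by_contra hne
  rcases lt_or_gt_of_ne hne with h | h
  exacts [hr.natDegree_interleave_mod_ne hn h hmod, hr.natDegree_interleave_mod_ne hn h hmod.symm]

/-- The heights of the generators `r_1, ..., r_n` of `S` have pairwise
distinct residues modulo `n`, and these residues exhaust `ℤ/nℤ`: the map
`j ↦ h(r_j) mod n` is a bijection onto `ZMod n`. -/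
theorem stmt_15 (n N : ℕ) (hn : 1 ≤ n) (hN : 1 ≤ N)
    (z : Fin N → ℂ) (α : Fin N → Fin n → ℂ)
    (hα : ∀ j : Fin N, 0 < ∑ k : Fin n, ‖α j k‖)
    (r : Fin n → (Fin n → ℂ[X])) (hr : IsGenerators n N z α r) :
    ∃ H : Fin n → ℕ,
      (∀ j : Fin n, height n (r j) = ((H j : ℤ) : WithBot ℤ)) ∧
      Function.Bijective (fun j : Fin n => ((H j : ZMod n))) :=
  stmt_15_general n N hn z α r hr
end
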